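/- arXiv:1707.03916 — 2 statements merged into one kernel-verified Lean document; each statement's English description precedes it below -/
import Mathlib

section
/- Let $K_{11} \in \mathbb{R}^{n_1 \times n_1}$ be positive definite, $K_1 \in \mathbb{R}^{n_1 \times n}$, and $R \in \mathbb{R}^{n \times n}$ be an invertible diagonal matrix. Set $C_1 = R K_1^T$ (covariances scaled by $R$), let $V_{11}$ be such that $K_{11} = V_{11}^T V_{11}$ with $V_{11}$ invertible, and $V = C_1 V_{11}^{-1}$. Then for any $K_1^* \in \mathbb{R}^{m \times n_1}$ and $Y \in \mathbb{R}^n$: $K_1^* K_{11}^{-1} K_1 (K_1^T K_{11}^{-1} K_1 + R^{-2})^{-1} Y = K_1^* V_{11}^{-1} (I_{n_1} + V^T V)^{-1} V^T R Y$, provided $K_1^T K_{11}^{-1} K_1 + R^{-2}$ is invertible. -/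
open Matrix

theorem nystrom_posterior_mean_identity {n n1 m : ℕ}
    (K11 : Matrix (Fin n1) (Fin n1) ℝ) (hK11 : K11.PosDef)
    (K1 : Matrix (Fin n1) (Fin n) ℝ)
    (R : Matrix (Fin n) (Fin n) ℝ) (hRdiag : R.IsDiag) (hR : IsUnit R.det)
    (V11 : Matrix (Fin n1) (Fin n1) ℝ) (hV11 : IsUnit V11.det)
    (hfact : K11 = V11ᵀ * V11)
    (K1s : Matrix (Fin m) (Fin n1) ℝ) (Y : Fin n → ℝ)
    (hinv : IsUnit (K1ᵀ * K11⁻¹ * K1 + R⁻¹ * R⁻¹).det) :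
    (K1s * K11⁻¹ * K1 * (K1ᵀ * K11⁻¹ * K1 + R⁻¹ * R⁻¹)⁻¹) *ᵥ Y =
      (K1s * V11⁻¹ * (1 + (R * K1ᵀ * V11⁻¹)ᵀ * (R * K1ᵀ * V11⁻¹))⁻¹ *
        (R * K1ᵀ * V11⁻¹)ᵀ * R) *ᵥ Y := by
  set W : Matrix (Fin n) (Fin n1) ℝ := R * K1ᵀ * V11⁻¹ with hW
  -- R is symmetric since it is diagonal
  have hRT : Rᵀ = R := by
    ext i j
    by_cases h : i = j
    · subst h; rfl
    · rw [transpose_apply, hRdiag h, hRdiag (Ne.symm h)]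
  have hV11T : IsUnit V11ᵀ.det := by rwa [det_transpose]
  have hK11inv : K11⁻¹ = V11⁻¹ * V11ᵀ⁻¹ := by
    rw [hfact, Matrix.mul_inv_rev]
  have hWT : Wᵀ = V11ᵀ⁻¹ * K1 * R := by
    rw [hW, transpose_mul, transpose_mul, transpose_nonsing_inv, transpose_transpose, hRT]
    simp only [Matrix.mul_assoc]
  have hRinvW : R⁻¹ * W = K1ᵀ * V11⁻¹ := by
    rw [hW, ← Matrix.mul_assoc, ← Matrix.mul_assoc, nonsing_inv_mul R hR, Matrix.one_mul]
  have hWTRinv : Wᵀ * R⁻¹ = V11ᵀ⁻¹ * K1 := by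
    rw [hWT, Matrix.mul_assoc, mul_nonsing_inv R hR, Matrix.mul_one]
  -- positive-definiteness of the two Gram perturbations of the identity
  have hpsd1 : (Wᵀ * W).PosSemidef := by
    simpa using Matrix.posSemidef_conjTranspose_mul_self W
  have hpsd2 : (W * Wᵀ).PosSemidef := by
    simpa using Matrix.posSemidef_self_mul_conjTranspose W
  have hpd1 : (1 + Wᵀ * W).PosDef := Matrix.PosDef.add_posSemidef Matrix.PosDef.one hpsd1
  have hpd2 : (1 + W * Wᵀ).PosDef := Matrix.PosDef.add_posSemidef Matrix.PosDef.one hpsd2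
  have hu1 : IsUnit (1 + Wᵀ * W).det := isUnit_iff_ne_zero.mpr (ne_of_gt hpd1.det_pos)
  have hu2 : IsUnit (1 + W * Wᵀ).det := isUnit_iff_ne_zero.mpr (ne_of_gt hpd2.det_pos)
  -- the middle matrix
  have hS : K1ᵀ * K11⁻¹ * K1 + R⁻¹ * R⁻¹ = R⁻¹ * (1 + W * Wᵀ) * R⁻¹ := by
    have h1 : R⁻¹ * (1 + W * Wᵀ) * R⁻¹ =
        (R⁻¹ * W) * (Wᵀ * R⁻¹) + R⁻¹ * R⁻¹ := by
      simp only [Matrix.mul_add, Matrix.add_mul, Matrix.mul_one, Matrix.one_mul,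
        Matrix.mul_assoc]
      rw [add_comm]
    rw [h1, hRinvW, hWTRinv, hK11inv]
    simp only [Matrix.mul_assoc]
  -- push-through identity
  have hpush : (1 + Wᵀ * W)⁻¹ * Wᵀ = Wᵀ * (1 + W * Wᵀ)⁻¹ := by
    have hswap : (1 + Wᵀ * W) * Wᵀ = Wᵀ * (1 + W * Wᵀ) := by
      simp only [Matrix.add_mul, Matrix.mul_add, Matrix.one_mul, Matrix.mul_one,
        Matrix.mul_assoc]
    calc (1 + Wᵀ * W)⁻¹ * Wᵀ
        = (1 + Wᵀ * W)⁻¹ * (Wᵀ * (1 + W * Wᵀ)) * (1 + W * Wᵀ)⁻¹ := by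
          rw [Matrix.mul_assoc ((1 + Wᵀ * W)⁻¹), Matrix.mul_assoc Wᵀ,
            mul_nonsing_inv _ hu2, Matrix.mul_one]
      _ = (1 + Wᵀ * W)⁻¹ * ((1 + Wᵀ * W) * Wᵀ) * (1 + W * Wᵀ)⁻¹ := by rw [hswap]
      _ = Wᵀ * (1 + W * Wᵀ)⁻¹ := by
          rw [← Matrix.mul_assoc ((1 + Wᵀ * W)⁻¹), nonsing_inv_mul _ hu1, Matrix.one_mul]
  -- matrix equality
  have hmat : K1s * K11⁻¹ * K1 * (K1ᵀ * K11⁻¹ * K1 + R⁻¹ * R⁻¹)⁻¹ =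
      K1s * V11⁻¹ * (1 + Wᵀ * W)⁻¹ * Wᵀ * R := by
    have hSinv : (K1ᵀ * K11⁻¹ * K1 + R⁻¹ * R⁻¹)⁻¹ = R * (1 + W * Wᵀ)⁻¹ * R := by
      rw [hS, Matrix.mul_inv_rev, Matrix.mul_inv_rev, nonsing_inv_nonsing_inv R hR]
      simp only [Matrix.mul_assoc]
    rw [hSinv, hK11inv]
    calc K1s * (V11⁻¹ * V11ᵀ⁻¹) * K1 * (R * (1 + W * Wᵀ)⁻¹ * R)
        = K1s * V11⁻¹ * (V11ᵀ⁻¹ * K1 * (R * (1 + W * Wᵀ)⁻¹)) * R := by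
          simp only [Matrix.mul_assoc]
      _ = K1s * V11⁻¹ * (Wᵀ * (1 + W * Wᵀ)⁻¹) * R := by
          rw [← Matrix.mul_assoc (V11ᵀ⁻¹ * K1), ← hWT]
      _ = K1s * V11⁻¹ * ((1 + Wᵀ * W)⁻¹ * Wᵀ) * R := by rw [hpush]
      _ = K1s * V11⁻¹ * (1 + Wᵀ * W)⁻¹ * Wᵀ * R := by
          simp only [Matrix.mul_assoc]
  rw [hmat]
end

section
/- Let $K_{11} \in \mathbb{R}^{n_1 \times n_1}$ be positive definite with Cholesky-type factorization $K_{11} = V_{11}^T V_{11}$ ($V_{11}$ invertible), $K_1 \in \mathbb{R}^{n_1 \times n}$, $R \in \mathbb{R}^{n \times n}$ invertible diagonal, $C_1 = R K_1^T$, $V = C_1 V_{11}^{-1}$. Then for any $K_1^* \in \mathbb{R}^{m \times n_1}$: $K_1^* K_{11}^{-1} (K_1^*)^T - K_1^* K_{11}^{-1} K_1 (R^{-2} + K_1^T K_{11}^{-1} K_1)^{-1} K_1^T K_{11}^{-1} (K_1^*)^T = K_1^* V_{11}^{-1} (I_{n_1} + V^T V)^{-1} V_{11}^{-T} (K_1^*)^T$,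 provided $R^{-2} + K_1^T K_{11}^{-1} K_1$ is invertible. -/
open Matrix

theorem nystrom_posterior_variance_identity {n n1 m : ℕ}
    (K11 : Matrix (Fin n1) (Fin n1) ℝ) (hK11 : K11.PosDef)
    (V11 : Matrix (Fin n1) (Fin n1) ℝ) (hV11 : IsUnit V11.det)
    (hfact : K11 = V11ᵀ * V11)
    (K1 : Matrix (Fin n1) (Fin n) ℝ)
    (R : Matrix (Fin n) (Fin n) ℝ) (hRdiag : R.IsDiag) (hR : IsUnit R.det)
    (K1s : Matrix (Fin m) (Fin n1) ℝ)
    (hinv : IsUnit (R⁻¹ * R⁻¹ + K1ᵀ * K11⁻¹ * K1).det) :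
    K1s * K11⁻¹ * K1sᵀ -
      K1s * K11⁻¹ * K1 * (R⁻¹ * R⁻¹ + K1ᵀ * K11⁻¹ * K1)⁻¹ * K1ᵀ * K11⁻¹ * K1sᵀ =
    K1s * V11⁻¹ * (1 + (R * K1ᵀ * V11⁻¹)ᵀ * (R * K1ᵀ * V11⁻¹))⁻¹ * (V11⁻¹)ᵀ * K1sᵀ := by
  have hRsymm : Rᵀ = R := hRdiag.isSymm
  have hRr : R * R⁻¹ = 1 := mul_nonsing_inv _ hR
  have hRl : R⁻¹ * R = 1 := nonsing_inv_mul _ hR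
  set W := V11⁻¹ with hWdef
  set V := R * K1ᵀ * W with hVdef
  have hK11inv : K11⁻¹ = W * Wᵀ := by
    rw [hfact, Matrix.mul_inv_rev, ← Matrix.transpose_nonsing_inv]
  have hVt : Vᵀ = Wᵀ * K1 * R := by
    rw [hVdef, Matrix.transpose_mul, Matrix.transpose_mul, hRsymm,
      Matrix.transpose_transpose, Matrix.mul_assoc]
  set M := R⁻¹ * R⁻¹ + K1ᵀ * K11⁻¹ * K1 with hMdef
  have hRMR : R * M * R = 1 + V * Vᵀ := by
    rw [hMdef, hK11inv, hVdef, hVt, Matrix.mul_add, Matrix.add_mul]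
    congr 1
    · simp only [Matrix.mul_assoc, hRl, Matrix.mul_one, hRr]
    · simp only [Matrix.mul_assoc]
  have hAu : IsUnit (1 + V * Vᵀ).det := by
    rw [← hRMR, Matrix.det_mul, Matrix.det_mul]
    exact (hR.mul hinv).mul hR
  have hMR : M = R⁻¹ * (1 + V * Vᵀ) * R⁻¹ := by
    rw [← hRMR]
    simp only [Matrix.mul_assoc, hRr, Matrix.mul_one]
    rw [← Matrix.mul_assoc, hRl, Matrix.one_mul]
  have hMinv : M⁻¹ = R * (1 + V * Vᵀ)⁻¹ * R := by
    rw [hMR, Matrix.mul_inv_rev, Matrix.mul_inv_rev,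
      Matrix.nonsing_inv_nonsing_inv _ hR]
    simp only [Matrix.mul_assoc]
  have hkey : (1 + Vᵀ * V)⁻¹ = 1 - Vᵀ * (1 + V * Vᵀ)⁻¹ * V := by
    apply Matrix.inv_eq_right_inv
    have hpush : (1 + Vᵀ * V) * (Vᵀ * (1 + V * Vᵀ)⁻¹) = Vᵀ := by
      have h1 : (1 + Vᵀ * V) * Vᵀ = Vᵀ * (1 + V * Vᵀ) := by
        rw [Matrix.add_mul, Matrix.mul_add, Matrix.one_mul, Matrix.mul_one,
          Matrix.mul_assoc, Matrix.mul_assoc]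
      rw [← Matrix.mul_assoc, h1, Matrix.mul_assoc,
        Matrix.mul_nonsing_inv _ hAu, Matrix.mul_one]
    calc (1 + Vᵀ * V) * (1 - Vᵀ * (1 + V * Vᵀ)⁻¹ * V)
        = (1 + Vᵀ * V) - (1 + Vᵀ * V) * (Vᵀ * (1 + V * Vᵀ)⁻¹) * V := by
          simp only [Matrix.mul_sub, Matrix.mul_one, Matrix.mul_assoc]
      _ = (1 + Vᵀ * V) - Vᵀ * V := by rw [hpush]
      _ = 1 := add_sub_cancel_right 1 (Vᵀ * V)
  rw [hK11inv, hMinv, hkey, hVt]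
  simp only [hVdef, hVt, Matrix.mul_sub, Matrix.sub_mul, Matrix.mul_one, Matrix.mul_assoc]
end
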